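/- arXiv:math/0505221 — 2 statements merged into one kernel-verified Lean document; each statement's English description precedes it below -/
import Mathlib

section
/- Let s be Sylvester's sequence, defined by s_0 = 2 and s_{k+1} = s_k^2 - s_k + 1, and let n ≥ 3. If a is an integer satisfying s_{n-1} < a < s_0 · s_1 ⋯ s_{n-1} (equivalently s_{n-1} < a < s_n - 1) and gcd(a, s_i) = 1 for all 0 ≤ i ≤ n-1, then the sequence (a_0, ..., a_n) = (s_0, ..., s_{n-1}, a) satisfies both inequalities 1 < ∑_{i=0}^{n-1} 1/s_i + 1/a < 1 + (n/(n-1))·(1/a). -/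
/-- If `s (n-1) < a < s 0 * ⋯ * s (n-1)` and `a` is coprime to the first `n` terms of
Sylvester's sequence, then `(s 0, …, s (n-1), a)` satisfies both inequalities
`1 < ∑_{i<n} 1/s_i + 1/a < 1 + (n/(n-1)) * (1/a)`. -/
theorem sylvester_fano_and_klt (s : ℕ → ℕ) (h0 : s 0 = 2)
    (hrec : ∀ k, s (k + 1) = s k ^ 2 - s k + 1)
    (n : ℕ) (hn : 3 ≤ n) (a : ℕ)
    (halo : s (n - 1) < a)
    (hahi : a < ∏ i ∈ Finset.range n, s i)
    (hcop : ∀ i < n, Nat.Coprime a (s i)) :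
    1 < (∑ i ∈ Finset.range n, (1 : ℚ) / (s i)) + 1 / (a : ℚ) ∧
    (∑ i ∈ Finset.range n, (1 : ℚ) / (s i)) + 1 / (a : ℚ) <
      1 + ((n : ℚ) / ((n : ℚ) - 1)) * (1 / (a : ℚ)) := by
  -- s k ≥ 2 for all k
  have hs2 : ∀ k, 2 ≤ s k := by
    intro k
    induction k with
    | zero => omega
    | succ k ih =>
      rw [hrec k, pow_two]
      have : s k * 2 ≤ s k * s k := Nat.mul_le_mul_left _ ih
      omega
  -- product identity: s n = ∏_{i<n} s i + 1
  have hprod : ∀ m, s m = (∏ i ∈ Finset.range m, s i) + 1 := by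
    intro m
    induction m with
    | zero => simp [h0]
    | succ m ih =>
      rw [Finset.prod_range_succ, hrec m, pow_two]
      have h2 := hs2 m
      have hP' : (∏ i ∈ Finset.range m, s i) = s m - 1 := by omega
      have : s m * (∏ i ∈ Finset.range m, s i) = s m * s m - s m := by
        rw [hP']
        zify [show 1 ≤ s m by omega, show s m ≤ s m * s m from Nat.le_mul_of_pos_left _ (by omega)]
        ring
      rw [mul_comm (∏ i ∈ Finset.range m, s i) (s m)]
      omega
  -- sum identity in ℚ
  have hsum : ∀ m, (∑ i ∈ Finset.range m, (1 : ℚ) / (s i))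
      = 1 - 1 / (∏ i ∈ Finset.range m, (s i : ℚ)) := by
    intro m
    induction m with
    | zero => simp
    | succ m ih =>
      rw [Finset.sum_range_succ, Finset.prod_range_succ, ih]
      have hP : (∏ i ∈ Finset.range m, (s i : ℚ)) = ((∏ i ∈ Finset.range m, s i : ℕ) : ℚ) := by
        push_cast; ring
      have hPpos : (0 : ℚ) < ∏ i ∈ Finset.range m, (s i : ℚ) := by
        rw [hP]
        exact_mod_cast Finset.prod_pos (fun i (_ : i ∈ Finset.range m) => by have := hs2 i; omega)
      have hspos : (0 : ℚ) < (s m : ℚ) := by exact_mod_cast lt_of_lt_of_le two_pos (hs2 m)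
      have hsm : (s m : ℚ) = (∏ i ∈ Finset.range m, (s i : ℚ)) + 1 := by
        rw [hP]; exact_mod_cast hprod m
      field_simp
      rw [hsm]; ring
  have hapos : (0 : ℚ) < (a : ℚ) := by
    have := hs2 (n - 1); exact_mod_cast by omega
  have hP : (∏ i ∈ Finset.range n, (s i : ℚ)) = ((∏ i ∈ Finset.range n, s i : ℕ) : ℚ) := by
    push_cast; ring
  have hPpos : (0 : ℚ) < (∏ i ∈ Finset.range n, s i : ℕ) := by
    exact_mod_cast Finset.prod_pos (fun i (_ : i ∈ Finset.range n) => by have := hs2 i; omega)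
  have haP : (a : ℚ) < ((∏ i ∈ Finset.range n, s i : ℕ) : ℚ) := by exact_mod_cast hahi
  rw [hsum n, hP]
  constructor
  · have h1 : 1 / ((∏ i ∈ Finset.range n, s i : ℕ) : ℚ) < 1 / (a : ℚ) :=
      one_div_lt_one_div_of_lt hapos haP
    linarith
  · have hn1 : (1 : ℚ) < (n : ℚ) / ((n : ℚ) - 1) := by
      have hn3 : (3 : ℚ) ≤ (n : ℚ) := by exact_mod_cast hn
      rw [lt_div_iff₀ (by linarith)]
      linarith
    have h2 : 1 / (a : ℚ) < ((n : ℚ) / ((n : ℚ) - 1)) * (1 / (a : ℚ)) := by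
      nlinarith [one_div_pos.mpr hapos]
    have h3 : 0 < 1 / ((∏ i ∈ Finset.range n, s i : ℕ) : ℚ) := by positivity
    linarith
end

section
/- Let s be Sylvester's sequence, defined by s_0 = 2 and s_{k+1} = s_k^2 - s_k + 1, and let n ≥ 3. If a is an integer satisfying s_n - s_{n-1} < a < s_n and a ≠ s_n - 1, then 1 < ∑_{i=0}^{n-1} 1/s_i + 1/a < 1 + (n/(n-1))·(1/(s_{n-1}·a)). -/
/-- If `s n - s (n-1) < a < s n` and `a ≠ s n - 1`, then the sequence
`(s 0, …, s (n-1), a)` satisfies the stronger inequalities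
`1 < ∑_{i<n} 1/s_i + 1/a < 1 + (n/(n-1)) * (1/(s (n-1) * a))`. -/
theorem sylvester_strong_klt (s : ℕ → ℕ) (h0 : s 0 = 2)
    (hrec : ∀ k, s (k + 1) = s k ^ 2 - s k + 1)
    (n : ℕ) (hn : 3 ≤ n) (a : ℕ)
    (halo : s n - s (n - 1) < a) (hahi : a < s n) (hane : a ≠ s n - 1) :
    1 < (∑ i ∈ Finset.range n, (1 : ℚ) / (s i)) + 1 / (a : ℚ) ∧
    (∑ i ∈ Finset.range n, (1 : ℚ) / (s i)) + 1 / (a : ℚ) <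
      1 + ((n : ℚ) / ((n : ℚ) - 1)) * (1 / ((s (n - 1) : ℚ) * (a : ℚ))) := by
  -- s k ≥ 2
  have hs2 : ∀ k, 2 ≤ s k := by
    intro k
    induction k with
    | zero => omega
    | succ k ih =>
      rw [hrec, sq]
      have hmul : 2 * s k ≤ s k * s k := Nat.mul_le_mul_right _ ih
      obtain ⟨m, hm⟩ : ∃ m, m = s k * s k := ⟨_, rfl⟩
      rw [← hm] at hmul ⊢
      omega
  -- recursion in ℚ
  have hq : ∀ k, (s (k+1) : ℚ) = (s k : ℚ) * (s k : ℚ) - (s k : ℚ) + 1 := by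
    intro k
    have hle : s k ≤ s k * s k := Nat.le_mul_of_pos_left _ (by have := hs2 k; omega)
    rw [hrec, sq, Nat.cast_add, Nat.cast_sub hle, Nat.cast_mul, Nat.cast_one]
  -- telescoping sum
  have hsum : ∀ m, ∑ i ∈ Finset.range m, (1 : ℚ) / (s i) = 1 - 1 / ((s m : ℚ) - 1) := by
    intro m
    induction m with
    | zero => simp [h0]; norm_num
    | succ m ih =>
      have h2 : (2 : ℚ) ≤ (s m : ℚ) := by exact_mod_cast hs2 m
      have hne0 : (s m : ℚ) ≠ 0 := by linarith
      have hne1 : (s m : ℚ) - 1 ≠ 0 := by intro h; linarith [sub_eq_zero.mp h]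
      rw [Finset.sum_range_succ, ih, hq]
      have hden : (s m : ℚ) * (s m : ℚ) - (s m : ℚ) + 1 - 1 = (s m : ℚ) * ((s m : ℚ) - 1) := by
        ring
      rw [hden]
      field_simp
      ring
  -- notation
  have hx := hs2 (n-1)
  have hrecn : s n = s (n-1) * s (n-1) - s (n-1) + 1 := by
    have h1 : n - 1 + 1 = n := by omega
    calc s n = s (n-1+1) := by rw [h1]
    _ = s (n-1) ^ 2 - s (n-1) + 1 := hrec _
    _ = _ := by rw [sq]
  have hmul : 2 * s (n-1) ≤ s (n-1) * s (n-1) := Nat.mul_le_mul_right _ hx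
  have hle : s (n-1) + 1 ≤ s n := by
    obtain ⟨m, hm⟩ : ∃ m, m = s (n-1) * s (n-1) := ⟨_, rfl⟩
    rw [← hm] at hrecn hmul
    omega
  set b : ℚ := (s (n-1) : ℚ) with hbdef
  set A : ℚ := (a : ℚ) with hAdef
  set t : ℚ := (n : ℚ) with htdef
  have hb2 : (2 : ℚ) ≤ b := by rw [hbdef]; exact_mod_cast hx
  have ht3 : (3 : ℚ) ≤ t := by rw [htdef]; exact_mod_cast hn
  have hqn : (s n : ℚ) = b * b - b + 1 := by
    have h1 : n - 1 + 1 = n := by omega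
    rw [← h1, hq]
  -- a bounds in ℚ
  have ha1 : 1 ≤ a := by omega
  have ha0 : (0 : ℚ) < A := by rw [hAdef]; exact_mod_cast ha1
  have hAlo : b * b - 2 * b + 1 < A := by
    have h1 : s n < a + s (n-1) := by omega
    have h2 : (s n : ℚ) < A + b := by rw [hAdef, hbdef]; exact_mod_cast h1
    rw [hqn] at h2
    linarith
  have hAhi : A + 2 ≤ b * b - b + 1 := by
    have h1 : a + 2 ≤ s n := by
      have h2 := hs2 n
      omega
    have h2 : A + 2 ≤ (s n : ℚ) := by rw [hAdef]; exact_mod_cast h1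
    rw [hqn] at h2
    linarith
  -- rewrite the sum
  rw [hsum n, hqn]
  have hden : b * b - b + 1 - 1 = b * (b - 1) := by ring
  rw [hden]
  have hb0 : (0 : ℚ) < b := by linarith
  have hb1 : (0 : ℚ) < b - 1 := by linarith
  have hbb : (0 : ℚ) < b * (b - 1) := mul_pos hb0 hb1
  have ht1 : (0 : ℚ) < t - 1 := by linarith
  constructor
  · have hAlt : A < b * (b - 1) := by nlinarith
    have h := one_div_lt_one_div_of_lt ha0 hAlt
    linarith
  · have key : 1 / A - 1 / (b * (b - 1)) < t / (t - 1) * (1 / (b * A)) := by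
      rw [div_sub_div _ _ (ne_of_gt ha0) (ne_of_gt hbb), div_mul_div_comm, mul_one,
        div_lt_div_iff₀ (by positivity) (by positivity)]
      nlinarith [mul_pos (mul_pos ha0 hb0) (mul_pos ht1 (sub_pos.mpr hAlo)),
        mul_pos (mul_pos ha0 hb0) hb1]
    linarith
end
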